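/- In the structure R₂, if α <₂ β for some ordinal β > α, then the set {γ < α : γ <₁ α} of <₁-predecessors of α is cofinal in α; in particular α is a limit ordinal and the order type of its set of <₁-predecessors is a limit ordinal (α is the proper supremum of an infinite <₁-chain). -/

import Mathlib

open Ordinal

noncomputable section

/-- The least epsilon number: the least fixed point of `ξ ↦ ω ^ ξ`. -/
def eps0 : Ordinal := sInf {ξ : Ordinal | Ordinal.omega0 ^ ξ = ξ}

namespace R2

/-- Terms of the language `{≤, ≤₁, ≤₂}`: existentially quantified variables,
universally quantified variables, and parameters (ordinal constants). -/
inductive Trm : Type 1 where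
  | evar : ℕ → Trm
  | avar : ℕ → Trm
  | cst  : Ordinal → Trm

def Trm.val (v w : ℕ → Ordinal) : Trm → Ordinal
  | .evar n => v n
  | .avar n => w n
  | .cst c  => c

/-- Quantifier-free formulas in the language `{≤, ≤₁, ≤₂}`. -/
inductive QF : Type 1 where
  | le  : Trm → Trm → QF
  | le1 : Trm → Trm → QF
  | le2 : Trm → Trm → QF
  | not : QF → QF
  | and : QF → QF → QF
  | or  : QF → QF → QF

def QF.eval (r1 r2 : Ordinal → Ordinal → Prop) (v w : ℕ → Ordinal) : QF → Prop
  | .le s t  => s.val v w ≤ t.val v w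
  | .le1 s t => r1 (s.val v w) (t.val v w)
  | .le2 s t => r2 (s.val v w) (t.val v w)
  | .not φ   => ¬ φ.eval r1 r2 v w
  | .and φ ψ => φ.eval r1 r2 v w ∧ ψ.eval r1 r2 v w
  | .or φ ψ  => φ.eval r1 r2 v w ∨ ψ.eval r1 r2 v w

def Trm.NoAvar : Trm → Prop
  | .avar _ => False
  | _ => True

def QF.NoAvar : QF → Prop
  | .le s t  => s.NoAvar ∧ t.NoAvar
  | .le1 s t => s.NoAvar ∧ t.NoAvar
  | .le2 s t => s.NoAvar ∧ t.NoAvar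
  | .not φ   => φ.NoAvar
  | .and φ ψ => φ.NoAvar ∧ ψ.NoAvar
  | .or φ ψ  => φ.NoAvar ∧ ψ.NoAvar

def Trm.CstBelow (δ : Ordinal) : Trm → Prop
  | .cst c => c < δ
  | _ => True

def QF.CstBelow (δ : Ordinal) : QF → Prop
  | .le s t  => s.CstBelow δ ∧ t.CstBelow δ
  | .le1 s t => s.CstBelow δ ∧ t.CstBelow δ
  | .le2 s t => s.CstBelow δ ∧ t.CstBelow δ
  | .not φ   => φ.CstBelow δ
  | .and φ ψ => φ.CstBelow δ ∧ ψ.CstBelow δ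
  | .or φ ψ  => φ.CstBelow δ ∧ ψ.CstBelow δ

/-- Satisfaction of a Σ₁-formula (an existential block in front of a
quantifier-free formula without universal variables) in the segment of
ordinals `< δ`, with the indicated interpretations of `≤₁` and `≤₂`. -/
def Sat1 (r1 r2 : Ordinal → Ordinal → Prop) (δ : Ordinal) (φ : QF) : Prop :=
  ∃ v : ℕ → Ordinal, (∀ n, v n < δ) ∧ φ.eval r1 r2 v v

/-- Satisfaction of a Σ₂-formula (a block of existential quantifiers followed
by a block of universal quantifiers in front of a quantifier-free formula) in
the segment of ordinals `< δ`. -/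
def Sat2 (r1 r2 : Ordinal → Ordinal → Prop) (δ : Ordinal) (φ : QF) : Prop :=
  ∃ v : ℕ → Ordinal, (∀ n, v n < δ) ∧
    ∀ w : ℕ → Ordinal, (∀ n, w n < δ) → φ.eval r1 r2 v w

/-- `(α; ≤, ≤₁, ≤₂)` is a Σ₁-elementary substructure of `(β; ≤, ≤₁, ≤₂)`:
Σ₁-sentences with parameters `< α` hold in `α` iff they hold in `β`. -/
def Sig1Elem (r1 r2 : Ordinal → Ordinal → Prop) (α β : Ordinal) : Prop :=
  ∀ φ : QF, φ.NoAvar → φ.CstBelow α → (Sat1 r1 r2 α φ ↔ Sat1 r1 r2 β φ)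

/-- `(α; ≤, ≤₁, ≤₂)` is a Σ₂-elementary substructure of `(β; ≤, ≤₁, ≤₂)`. -/
def Sig2Elem (r1 r2 : Ordinal → Ordinal → Prop) (α β : Ordinal) : Prop :=
  ∀ φ : QF, φ.CstBelow α → (Sat2 r1 r2 α φ ↔ Sat2 r1 r2 β φ)

/-- The simultaneous recursive (in `β`) definition of `α ≤₁ β` (`i = false`)
and `α ≤₂ β` (`i = true`): `α ≤ᵢ β` iff `α ≤ β` and `(α; ≤, ≤₁, ≤₂)` is a
Σᵢ-elementary substructure of `(β; ≤, ≤₁, ≤₂)`, where the relations `≤₁, ≤₂`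
are the restrictions to the segment below `β`, already defined by recursion. -/
noncomputable def leAux : Ordinal → Bool → Ordinal → Prop :=
  WellFounded.fix Ordinal.lt_wf fun β IH i α =>
    α ≤ β ∧
      (match i with
        | false => Sig1Elem
        | true  => Sig2Elem)
        (fun x y => ∃ h : y < β, IH y h false x)
        (fun x y => ∃ h : y < β, IH y h true x) α β

/-- `α ≤₁ β` in the structure `R₂`. -/
def le1 (α β : Ordinal) : Prop := leAux β false α

/-- `α ≤₂ β` in the structure `R₂`. -/
def le2 (α β : Ordinal) : Prop := leAux β true α

def lt1 (α β : Ordinal) : Prop := le1 α β ∧ α < β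

def lt2 (α β : Ordinal) : Prop := le2 α β ∧ α < β

/-- `h` is an isomorphism (w.r.t. `≤, ≤₁, ≤₂`) on the set `A`. -/
def IsoOn (h : Ordinal → Ordinal) (A : Set Ordinal) : Prop :=
  ∀ x ∈ A, ∀ y ∈ A,
    (x ≤ y ↔ h x ≤ h y) ∧ (le1 x y ↔ le1 (h x) (h y)) ∧ (le2 x y ↔ le2 (h x) (h y))

end R2

/-!
If `α <₂ β`, then the Σ₂-sentence "some `x > η` is `≤₁` every `y ≥ x`" (with parameter
`η < α`) holds in `β`, witnessed by `α`, so it holds in `α`. The witness `γ < α` is then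
`≤₁` every `y ∈ [γ, α)`, and since `α` is a limit (a successor `a + 1` would satisfy the
Π₁-sentence "everything is `≤ a`", which fails in `β`), every Σ₁-sentence true in `α`
already holds in some such `y`, hence in `γ`: so `γ <₁ α`.
-/

namespace R2

section Congruence

variable {r1 r2 r1' r2' : Ordinal → Ordinal → Prop} {B : Ordinal}

theorem Trm.val_lt {v w : ℕ → Ordinal} (hv : ∀ n, v n < B) (hw : ∀ n, w n < B) :
    ∀ {t : Trm}, t.CstBelow B → t.val v w < B
  | .evar n, _ => hv n
  | .avar n, _ => hw n
  | .cst _, h => h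

theorem QF.eval_congr_rel (h1 : ∀ x y, x < B → y < B → (r1 x y ↔ r1' x y))
    (h2 : ∀ x y, x < B → y < B → (r2 x y ↔ r2' x y))
    {v w : ℕ → Ordinal} (hv : ∀ n, v n < B) (hw : ∀ n, w n < B) :
    ∀ {φ : QF}, φ.CstBelow B → (φ.eval r1 r2 v w ↔ φ.eval r1' r2' v w)
  | .le _ _, _ => Iff.rfl
  | .le1 _ _, h => h1 _ _ (Trm.val_lt hv hw h.1) (Trm.val_lt hv hw h.2)
  | .le2 _ _, h => h2 _ _ (Trm.val_lt hv hw h.1) (Trm.val_lt hv hw h.2)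
  | .not _, h => not_congr (QF.eval_congr_rel h1 h2 hv hw h)
  | .and _ _, h => and_congr (QF.eval_congr_rel h1 h2 hv hw h.1)
      (QF.eval_congr_rel h1 h2 hv hw h.2)
  | .or _ _, h => or_congr (QF.eval_congr_rel h1 h2 hv hw h.1)
      (QF.eval_congr_rel h1 h2 hv hw h.2)

theorem Trm.CstBelow.mono {a b : Ordinal} (hab : a ≤ b) :
    ∀ {t : Trm}, t.CstBelow a → t.CstBelow b
  | .evar _, _ => trivial
  | .avar _, _ => trivial
  | .cst _, h => h.trans_le hab

theorem QF.CstBelow.mono {a b : Ordinal} (hab : a ≤ b) {φ : QF} (h : φ.CstBelow a) :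
    φ.CstBelow b := by
  induction φ with
  | le | le1 | le2 => exact ⟨h.1.mono hab, h.2.mono hab⟩
  | not _ ih => exact ih h
  | and _ _ ih1 ih2 | or _ _ ih1 ih2 => exact ⟨ih1 h.1, ih2 h.2⟩

theorem sig1Elem_congr_rel (h1 : ∀ x y, x < B → y < B → (r1 x y ↔ r1' x y))
    (h2 : ∀ x y, x < B → y < B → (r2 x y ↔ r2' x y)) {α : Ordinal} (hαB : α ≤ B) :
    Sig1Elem r1 r2 α B ↔ Sig1Elem r1' r2' α B := by
  refine forall_congr' fun φ => imp_congr_right fun _ => imp_congr_right fun hφ => ?_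
  have hφB := hφ.mono hαB
  have sat_congr : ∀ δ ≤ B, (Sat1 r1 r2 δ φ ↔ Sat1 r1' r2' δ φ) := fun δ hδ =>
    exists_congr fun v => and_congr_right fun hv =>
      QF.eval_congr_rel h1 h2 (fun n => (hv n).trans_le hδ) (fun n => (hv n).trans_le hδ) hφB
  rw [sat_congr α hαB, sat_congr B le_rfl]

theorem sig2Elem_congr_rel (h1 : ∀ x y, x < B → y < B → (r1 x y ↔ r1' x y))
    (h2 : ∀ x y, x < B → y < B → (r2 x y ↔ r2' x y)) {α : Ordinal} (hαB : α ≤ B) :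
    Sig2Elem r1 r2 α B ↔ Sig2Elem r1' r2' α B := by
  refine forall_congr' fun φ => imp_congr_right fun hφ => ?_
  have hφB := hφ.mono hαB
  have sat_congr : ∀ δ ≤ B, (Sat2 r1 r2 δ φ ↔ Sat2 r1' r2' δ φ) := fun δ hδ =>
    exists_congr fun v => and_congr_right fun hv => forall_congr' fun w =>
      imp_congr_right fun hw =>
        QF.eval_congr_rel h1 h2 (fun n => (hv n).trans_le hδ) (fun n => (hw n).trans_le hδ) hφB
  rw [sat_congr α hαB, sat_congr B le_rfl]

end Congruence

theorem le1_iff {α β : Ordinal} : le1 α β ↔ α ≤ β ∧ Sig1Elem le1 le2 α β := by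
  rw [le1, leAux, WellFounded.fix_eq]
  exact and_congr_right fun hαβ => sig1Elem_congr_rel
    (r1 := fun x y => ∃ _ : y < β, le1 x y) (r2 := fun x y => ∃ _ : y < β, le2 x y)
    (fun _ _ _ hy => exists_prop_of_true hy) (fun _ _ _ hy => exists_prop_of_true hy) hαβ

theorem le2_iff {α β : Ordinal} : le2 α β ↔ α ≤ β ∧ Sig2Elem le1 le2 α β := by
  rw [le2, leAux, WellFounded.fix_eq]
  exact and_congr_right fun hαβ => sig2Elem_congr_rel
    (r1 := fun x y => ∃ _ : y < β, le1 x y) (r2 := fun x y => ∃ _ : y < β, le2 x y)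
    (fun _ _ _ hy => exists_prop_of_true hy) (fun _ _ _ hy => exists_prop_of_true hy) hαβ

section Sigma1

variable {r1 r2 : Ordinal → Ordinal → Prop}

def Trm.evars : Trm → Finset ℕ
  | .evar n => {n}
  | _ => ∅

def QF.evars : QF → Finset ℕ
  | .le s t | .le1 s t | .le2 s t => s.evars ∪ t.evars
  | .not φ => φ.evars
  | .and φ ψ | .or φ ψ => φ.evars ∪ ψ.evars

theorem Trm.val_congr {v v' w w' : ℕ → Ordinal} :
    ∀ {t : Trm}, t.NoAvar → (∀ n ∈ t.evars, v n = v' n) → t.val v w = t.val v' w'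
  | .evar n, _, hv => hv n (Finset.mem_singleton_self n)
  | .cst _, _, _ => rfl

theorem QF.eval_congr {v v' w w' : ℕ → Ordinal} {φ : QF} (hφ : φ.NoAvar)
    (hv : ∀ n ∈ φ.evars, v n = v' n) : φ.eval r1 r2 v w ↔ φ.eval r1 r2 v' w' := by
  induction φ with
  | le s t | le1 s t | le2 s t =>
    simp only [QF.evars, Finset.mem_union] at hv
    have hs : s.val v w = s.val v' w' := Trm.val_congr hφ.1 fun n hn => hv n (Or.inl hn)
    have ht : t.val v w = t.val v' w' := Trm.val_congr hφ.2 fun n hn => hv n (Or.inr hn)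
    simp only [QF.eval, hs, ht]
  | not _ ih => exact not_congr (ih hφ hv)
  | and _ _ ih1 ih2 | or _ _ ih1 ih2 =>
    simp only [QF.evars, Finset.mem_union] at hv
    simp only [QF.eval, ih1 hφ.1 fun n hn => hv n (Or.inl hn),
      ih2 hφ.2 fun n hn => hv n (Or.inr hn)]

theorem sat1_iff_sat2 {δ : Ordinal} {φ : QF} (hφ : φ.NoAvar) :
    Sat1 r1 r2 δ φ ↔ Sat2 r1 r2 δ φ :=
  ⟨fun ⟨v, hv, hφv⟩ => ⟨v, hv, fun _ _ => (QF.eval_congr hφ fun _ _ => rfl).1 hφv⟩,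
    fun ⟨v, hv, H⟩ => ⟨v, hv, H v hv⟩⟩

theorem Sat1.mono {δ δ' : Ordinal} {φ : QF} (hδ : δ ≤ δ') (h : Sat1 r1 r2 δ φ) :
    Sat1 r1 r2 δ' φ :=
  let ⟨v, hv, hφv⟩ := h
  ⟨v, fun n => (hv n).trans_le hδ, hφv⟩

/-- Only the finitely many variables occurring in `φ` matter, and their values are bounded
below a limit. -/
theorem Sat1.exists_lt_of_isSuccLimit {δ : Ordinal} {φ : QF} (hδ : Order.IsSuccLimit δ)
    (hφ : φ.NoAvar) (h : Sat1 r1 r2 δ φ) : ∃ γ < δ, Sat1 r1 r2 γ φ := by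
  classical
  obtain ⟨v, hv, hφv⟩ := h
  have hsup : φ.evars.sup v < δ := (Finset.sup_lt_iff hδ.bot_lt).2 fun n _ => hv n
  refine ⟨Order.succ (φ.evars.sup v), hδ.succ_lt hsup,
    fun n => if n ∈ φ.evars then v n else 0, fun n => Order.lt_succ_of_le ?_,
    (QF.eval_congr hφ fun n hn => (if_pos hn).symm).1 hφv⟩
  dsimp only
  split_ifs with hn
  · exact Finset.le_sup hn
  · exact zero_le

end Sigma1

theorem le1_of_le2 {α β : Ordinal} (h : le2 α β) : le1 α β := by
  rw [le2_iff] at h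
  refine le1_iff.2 ⟨h.1, fun φ hφ hc => ?_⟩
  rw [sat1_iff_sat2 hφ, sat1_iff_sat2 hφ]
  exact h.2 φ hc

theorem lt1_of_lt2 {α β : Ordinal} (h : lt2 α β) : lt1 α β :=
  ⟨le1_of_le2 h.1, h.2⟩

theorem le1_of_le1_of_mem_Icc {α β γ : Ordinal} (h : le1 α β) (hγ : γ ∈ Set.Icc α β) :
    le1 α γ :=
  le1_iff.2 ⟨hγ.1, fun φ hφ hc =>
    ⟨Sat1.mono hγ.1, fun s => (le1_iff.1 h |>.2 φ hφ hc).2 (s.mono hγ.2)⟩⟩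

theorem le1_of_forall_mem_Ico {x α : Ordinal} (hα : Order.IsSuccLimit α) (hx : x < α)
    (H : ∀ y ∈ Set.Ico x α, le1 x y) : le1 x α := by
  refine le1_iff.2 ⟨hx.le, fun φ hφ hc => ⟨Sat1.mono hx.le, fun s => ?_⟩⟩
  obtain ⟨γ, hγ, sγ⟩ := s.exists_lt_of_isSuccLimit hα hφ
  have hxy := le1_iff.1 (H (max x γ) ⟨le_max_left x γ, max_lt hx hγ⟩)
  exact (hxy.2 φ hφ hc).2 (sγ.mono (le_max_right x γ))

theorem lt1.pos {α β : Ordinal} (h : lt1 α β) : 0 < α := by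
  have hβ : Sat1 le1 le2 β (.le (.evar 0) (.evar 0)) :=
    ⟨fun _ => α, fun _ => h.2, le_rfl⟩
  obtain ⟨v, hv, -⟩ := ((le1_iff.1 h.1).2 (.le (.evar 0) (.evar 0)) ⟨trivial, trivial⟩
    ⟨trivial, trivial⟩).2 hβ
  exact zero_le.trans_lt (hv 0)

theorem isSuccLimit_of_lt2 {α β : Ordinal} (h : lt2 α β) : Order.IsSuccLimit α := by
  rcases zero_or_succ_or_isSuccLimit α with h0 | ⟨a, rfl⟩ | hl
  · exact absurd h0 (lt1_of_lt2 h).pos.ne'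
  · have hsucc : Sat2 le1 le2 (Order.succ a) (.le (.avar 0) (.cst a)) :=
      ⟨fun _ => a, fun _ => Order.lt_succ a, fun _ hw => Order.lt_succ_iff.1 (hw 0)⟩
    obtain ⟨_, _, H⟩ :=
      ((le2_iff.1 h.1).2 (.le (.avar 0) (.cst a)) ⟨trivial, Order.lt_succ a⟩).1 hsucc
    exact absurd (H (fun _ => Order.succ a) fun _ => h.2) (Order.lt_succ a).not_ge
  · exact hl

theorem exists_forall_le1_of_lt2 {α β η : Ordinal} (h : lt2 α β) (hη : η < α) :
    ∃ γ, η < γ ∧ γ < α ∧ ∀ y ∈ Set.Ico γ α, le1 γ y := by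
  let σ : QF := .and (.not (.le (.evar 0) (.cst η)))
    (.or (.not (.le (.evar 0) (.avar 0))) (.le1 (.evar 0) (.avar 0)))
  have hβ : Sat2 le1 le2 β σ := by
    refine ⟨fun _ => α, fun _ => h.2, fun w hw => ⟨not_le.2 hη, ?_⟩⟩
    by_cases hαw : α ≤ w 0
    · exact Or.inr (le1_of_le1_of_mem_Icc (le1_of_le2 h.1) ⟨hαw, (hw 0).le⟩)
    · exact Or.inl hαw
  obtain ⟨v, hv, H⟩ :=
    ((le2_iff.1 h.1).2 σ ⟨⟨trivial, hη⟩, ⟨trivial, trivial⟩, trivial, trivial⟩).2 hβ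
  refine ⟨v 0, not_le.1 (H (fun _ => η) fun _ => hη).1, hv 0, fun y hy => ?_⟩
  exact (H (fun _ => y) fun _ => hy.2).2.resolve_left (not_not.2 hy.1)

end R2

/-- In `R₂`: if `α <₂ β`, the set of `<₁`-predecessors of `α` is cofinal in
`α`; in particular `α` is a limit ordinal. -/
theorem lt1_predecessors_cofinal_of_lt2 (α β : Ordinal) (h : R2.lt2 α β) :
    (∀ η < α, ∃ γ, η < γ ∧ γ < α ∧ R2.lt1 γ α) ∧ Order.IsSuccLimit α := by
  have hlim := R2.isSuccLimit_of_lt2 h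
  refine ⟨fun η hη => ?_, hlim⟩
  obtain ⟨γ, hηγ, hγα, hγ⟩ := R2.exists_forall_le1_of_lt2 h hη
  exact ⟨γ, hηγ, hγα, R2.le1_of_forall_mem_Ico hlim hγα hγ, hγα⟩

end
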